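/- arXiv:math/9805097 — 7 statements merged into one kernel-verified Lean document; each statement's English description precedes it below -/
import Mathlib

section
/- Let R be a commutative ring, let P, h be elements of R, let r, n, d be natural numbers with r ≤ n + 1, and let l : Fin r → ℕ with each l_j ≥ 1. For each natural number d set A(d) = ∏_{j=1}^{r} ∏_{m=0}^{d·l_j} (l_j·P + m·h) in R, where natural numbers act through the canonical map ℕ → R. Then for every d ≥ 0: (P + (d+1)·h)^{n+1-r} · A(d+1) = (∏_{j=1}^{r} l_j) · (P + (d+1)·h)^{n+1} · (∏_{j=1}^{r} ∏_{m=1}^{l_j - 1} (l_j·(P + d·h) + m·h)) · A(d). -/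
/-!
Going from `A d` to `A (d + 1)` appends to the `j`-th product the block of factors with
`m = d l_j + k`, `1 ≤ k ≤ l_j`, which read `l_j (P + d h) + k h`. The last one, `k = l_j`, is
`l_j (P + (d + 1) h)`; the `r` of them combine with `(P + (d + 1) h) ^ (n + 1 - r)` into
`(∏ l_j) (P + (d + 1) h) ^ (n + 1)`, and the others are the middle product.
-/

open Finset

theorem prod_range_add_succ_eq_mul_prod_Icc {M : Type*} [CommMonoid M] (f : ℕ → M) (a l : ℕ) :
    ∏ m ∈ range (a + l + 1), f m = (∏ m ∈ range (a + 1), f m) * ∏ k ∈ Icc 1 l, f (a + k) := by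
  rw [← prod_range_mul_prod_Ico f (by omega : a + 1 ≤ a + l + 1), ← Ico_add_one_right_eq_Icc,
    prod_Ico_eq_prod_range, prod_Ico_eq_prod_range]
  congr 1
  refine prod_congr (by congr 1; omega) fun k _ => ?_
  congr 1
  omega

theorem prod_range_succ_mul_factor {R : Type*} [CommRing R] (P h : R) (l d : ℕ) :
    ∏ m ∈ range ((d + 1) * l + 1), ((l : R) * P + m * h) =
      (l : R) * (P + ((d + 1 : ℕ) : R) * h) *
        (∏ m ∈ Icc 1 (l - 1), ((l : R) * (P + d * h) + m * h)) *
        ∏ m ∈ range (d * l + 1), ((l : R) * P + m * h) := by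
  rcases l with _ | t
  · simp
  have block_factor (k : ℕ) : ((t + 1 : ℕ) : R) * P + ((d * (t + 1) + k : ℕ) : R) * h =
      ((t + 1 : ℕ) : R) * (P + d * h) + k * h := by
    push_cast
    ring
  rw [add_one_mul, prod_range_add_succ_eq_mul_prod_Icc, prod_Icc_succ_top (by omega)]
  simp only [block_factor, Nat.add_sub_cancel]
  push_cast
  ring

theorem givental_coefficient_identity_general
    (R : Type*) [CommRing R] (P h : R) (r n d : ℕ) (hrn : r ≤ n + 1)
    (l : Fin r → ℕ)
    (A : ℕ → R)
    (hA : ∀ e : ℕ, A e =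
      ∏ j : Fin r, ∏ m ∈ Finset.range (e * l j + 1), ((l j : R) * P + (m : R) * h)) :
    (P + ((d + 1 : ℕ) : R) * h) ^ (n + 1 - r) * A (d + 1) =
      (∏ j : Fin r, (l j : R)) * (P + ((d + 1 : ℕ) : R) * h) ^ (n + 1) *
        (∏ j : Fin r, ∏ m ∈ Finset.Icc 1 (l j - 1),
          ((l j : R) * (P + (d : R) * h) + (m : R) * h)) *
        A d := by
  have hpow : (P + ((d + 1 : ℕ) : R) * h) ^ (n + 1) =
      (P + ((d + 1 : ℕ) : R) * h) ^ (n + 1 - r) * (P + ((d + 1 : ℕ) : R) * h) ^ r := by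
    rw [← pow_add, Nat.sub_add_cancel hrn]
  rw [hA, hA, hpow]
  simp only [prod_range_succ_mul_factor, prod_mul_distrib, prod_const, card_univ,
    Fintype.card_fin]
  ring

/-- Givental's coefficient identity behind the Picard-Fuchs equation for the
hypergeometric series of a complete intersection of multidegree `(l 1, …, l r)` in `ℙⁿ`. -/
theorem givental_coefficient_identity
    (R : Type*) [CommRing R] (P h : R) (r n d : ℕ) (hrn : r ≤ n + 1)
    (l : Fin r → ℕ) (hl : ∀ j, 1 ≤ l j)
    (A : ℕ → R)
    (hA : ∀ e : ℕ, A e =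
      ∏ j : Fin r, ∏ m ∈ Finset.range (e * l j + 1), ((l j : R) * P + (m : R) * h)) :
    (P + ((d + 1 : ℕ) : R) * h) ^ (n + 1 - r) * A (d + 1) =
      (∏ j : Fin r, (l j : R)) * (P + ((d + 1 : ℕ) : R) * h) ^ (n + 1) *
        (∏ j : Fin r, ∏ m ∈ Finset.Icc 1 (l j - 1),
          ((l j : R) * (P + (d : R) * h) + (m : R) * h)) *
        A d :=
  givental_coefficient_identity_general R P h r n d hrn l A hA
end

section
/- Let n, r be natural numbers with r ≥ 1, and let l : Fin r → ℕ with each l_j ≥ 1 and l_1 + ⋯ + l_r < n. Let R be a commutative ℚ-algebra, let ħ ∈ R be a unit, and let P ∈ R satisfy P^{n+1} = 0 (so that every element P + m·ħ with m ≥ 1 is a unit, being a unit plus a nilpotent). Define Γ(d) = (∏_{j=1}^{r} ∏_{m=0}^{d·l_j}(l_j·P + m·ħ)) · ((∏_{m=1}^{d}(P + m·ħ))⁻¹)^{n+1} ∈ R and the formal power series F = Σ_{d≥0} Γ(d)·X^d ∈ R[[X]]. Let D : R[[X]] → R[[X]] be the operator D(f) = P·f + ħ·X·f′, where f′ denotes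 the formal derivative. Then D^{n+1-r}(F) = (∏_{j=1}^{r} l_j) · X · ((∏_{j=1}^{r} ∏_{m=1}^{l_j-1} (l_j·D + (m·ħ)·id)) F), where the product of operators denotes composition (in any order; all these operators commute). -/
/-!
The operator `D = P + ħ X d/dX` is diagonal on monomials: it multiplies the coefficient of `Xᵈ`
by `P + dħ`, so any polynomial `p(D)` multiplies it by `p(P + dħ)`. Comparing coefficients, the
equation becomes the first-order recursion of the hypergeometric coefficients `Γ(d)`: raising
`d` to `d + 1` multiplies the numerator of `Γ` by `∏ⱼ lⱼ (P + (d+1)ħ) ∏_{0<m<lⱼ} (lⱼ(P + dħ) + mħ)`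
and the denominator by `(P + (d+1)ħ)^(n+1)`. In degree zero both sides vanish because
`Γ(0) = (∏ lⱼ) Pʳ` and `P^(n+1) = 0`.
-/

open Finset PowerSeries

theorem Finset.prod_range_add_succ_add_one {M : Type*} [CommMonoid M] (f : ℕ → M) (k l : ℕ) :
    ∏ m ∈ range (k + (l + 1) + 1), f m =
      (∏ m ∈ range (k + 1), f m) * (∏ m ∈ Icc 1 l, f (k + m)) * f (k + l + 1) := by
  rw [show k + (l + 1) + 1 = k + 1 + (l + 1) by ring, prod_range_add,
    prod_range_succ (fun x => f (k + 1 + x)), ← Ico_add_one_right_eq_Icc, prod_Ico_eq_prod_range,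
    Nat.add_sub_cancel, mul_assoc]
  simp only [← add_assoc, add_right_comm k 1]

section CommRing

variable {R : Type*} [CommRing R]

theorem prod_range_succ_mul_natCast_mul_add_natCast_mul (a b : R) (e l : ℕ) (hl : 1 ≤ l) :
    ∏ m ∈ range ((e + 1) * l + 1), ((l : R) * a + m * b) =
      (∏ m ∈ range (e * l + 1), ((l : R) * a + m * b)) *
        (∏ m ∈ Icc 1 (l - 1), ((l : R) * (a + e * b) + m * b)) * (l * (a + (e + 1) * b)) := by
  obtain ⟨l, rfl⟩ := Nat.exists_eq_add_of_le' hl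
  rw [add_one_mul, prod_range_add_succ_add_one, Nat.add_sub_cancel]
  congr 1
  · congr 1
    refine prod_congr rfl fun m _ => ?_
    push_cast
    ring
  · push_cast
    ring

theorem isUnit_add_natCast_mul [Algebra ℚ R] {P ħ : R} (hP : IsNilpotent P) (hħ : IsUnit ħ)
    {m : ℕ} (hm : m ≠ 0) : IsUnit (P + m * ħ) := by
  refine hP.isUnit_add_right_of_commute (IsUnit.mul ?_ hħ) (.all _ _)
  rw [← map_natCast (algebraMap ℚ R)]
  exact (isUnit_iff_ne_zero.mpr (Nat.cast_ne_zero.mpr hm)).map _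

section DiagonalOperator

variable {D : Module.End R R⟦X⟧}

theorem coeff_apply_of_eq_C_mul_add_C_mul_X_mul_derivative {P ħ : R}
    (hD : ∀ f : R⟦X⟧, D f = C P * f + C ħ * (X * derivative R f)) (d : ℕ) (f : R⟦X⟧) :
    coeff d (D f) = (P + d * ħ) * coeff d f := by
  rw [hD, map_add, coeff_C_mul, coeff_C_mul]
  rcases d with _ | d
  · simp
  · rw [coeff_succ_X_mul, coeff_derivative]
    push_cast
    ring

variable {μ : ℕ → R}

theorem coeff_aeval_apply_of_coeff_apply (hD : ∀ d f, coeff d (D f) = μ d * coeff d f)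
    (p : Polynomial R) (d : ℕ) (f : R⟦X⟧) :
    coeff d (Polynomial.aeval D p f) = p.eval (μ d) * coeff d f := by
  induction p using Polynomial.induction_on generalizing f with
  | C a => simp [Module.algebraMap_end_apply]
  | add p q hp hq => simp only [map_add, LinearMap.add_apply, Polynomial.eval_add, hp, hq, add_mul]
  | monomial k a ih =>
    rw [pow_succ, ← mul_assoc, map_mul, Polynomial.aeval_X, Module.End.mul_apply, ih, hD]
    simp only [Polynomial.eval_mul, Polynomial.eval_C, Polynomial.eval_X, Polynomial.eval_pow]
    ring

theorem coeff_pow_apply_of_coeff_apply (hD : ∀ d f, coeff d (D f) = μ d * coeff d f)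
    (k d : ℕ) (f : R⟦X⟧) : coeff d ((D ^ k) f) = μ d ^ k * coeff d f := by
  simpa using coeff_aeval_apply_of_coeff_apply hD (.X ^ k) d f

end DiagonalOperator

noncomputable def giventalCoeff {ι : Type*} [Fintype ι] (n : ℕ) (l : ι → ℕ) (P ħ : R) (d : ℕ) :
    R :=
  (∏ j, ∏ m ∈ range (d * l j + 1), ((l j : R) * P + (m : R) * ħ)) *
    (Ring.inverse (∏ m ∈ Icc 1 d, (P + (m : R) * ħ))) ^ (n + 1)

variable {ι : Type*} [Fintype ι] {n : ℕ} {l : ι → ℕ} {P ħ : R}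

theorem giventalCoeff_zero : giventalCoeff n l P ħ 0 = (∏ j, (l j : R)) * P ^ Fintype.card ι := by
  simp [giventalCoeff, prod_mul_distrib]

theorem pow_mul_giventalCoeff_succ (hl : ∀ j, 1 ≤ l j) {e k : ℕ}
    (hk : k + Fintype.card ι = n + 1) (hv : IsUnit (P + (e + 1) * ħ)) :
    (P + (e + 1) * ħ) ^ k * giventalCoeff n l P ħ (e + 1) =
      (∏ j, (l j : R)) * (∏ j, ∏ m ∈ Icc 1 (l j - 1), ((l j : R) * (P + e * ħ) + m * ħ)) *
        giventalCoeff n l P ħ e := by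
  have hcancel : (P + (e + 1) * ħ) ^ k * (P + (e + 1) * ħ) ^ Fintype.card ι *
      Ring.inverse (P + (e + 1) * ħ) ^ (n + 1) = 1 := by
    rw [← pow_add, hk, ← mul_pow, Ring.mul_inverse_cancel _ hv, one_pow]
  simp only [giventalCoeff, prod_range_succ_mul_natCast_mul_add_natCast_mul _ _ _ _ (hl _),
    prod_mul_distrib, prod_const, card_univ, prod_Icc_succ_top (Nat.le_add_left 1 e),
    Ring.mul_inverse_rev, mul_pow]
  push_cast
  linear_combination (∏ j, (l j : R)) *
    (∏ j, ∏ m ∈ Icc 1 (l j - 1), ((l j : R) * (P + e * ħ) + m * ħ)) *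
    (∏ j, ∏ m ∈ range (e * l j + 1), ((l j : R) * P + m * ħ)) *
    Ring.inverse (∏ m ∈ Icc 1 e, (P + m * ħ)) ^ (n + 1) * hcancel

end CommRing

theorem givental_picard_fuchs_small_degree_general
    (n r : ℕ) (l : Fin r → ℕ) (hl : ∀ j, 1 ≤ l j)
    (hsum : ∑ j, l j < n)
    (R : Type*) [CommRing R] [Algebra ℚ R] (hbar : R) (hu : IsUnit hbar)
    (P : R) (hP : P ^ (n + 1) = 0)
    (Γ : ℕ → R)
    (hΓ : ∀ d : ℕ, Γ d =
      (∏ j : Fin r, ∏ m ∈ Finset.range (d * l j + 1), ((l j : R) * P + (m : R) * hbar)) *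
        (Ring.inverse (∏ m ∈ Finset.Icc 1 d, (P + (m : R) * hbar))) ^ (n + 1))
    (F : PowerSeries R) (hF : F = PowerSeries.mk Γ)
    (D : Module.End R (PowerSeries R))
    (hD : ∀ f : PowerSeries R,
      D f = PowerSeries.C P * f + PowerSeries.C hbar * (PowerSeries.X * f.derivativeFun)) :
    (D ^ (n + 1 - r)) F =
      PowerSeries.C (∏ j : Fin r, (l j : R)) * PowerSeries.X *
        ((Polynomial.aeval D
            (∏ j : Fin r, ∏ m ∈ Finset.Icc 1 (l j - 1),
              (Polynomial.C (l j : R) * Polynomial.X + Polynomial.C ((m : R) * hbar)))) F) := by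
  obtain rfl : Γ = giventalCoeff n l P hbar := funext hΓ
  have hk : n + 1 - r + Fintype.card (Fin r) = n + 1 := by
    have : r ≤ ∑ j, l j := by simpa using card_nsmul_le_sum univ l 1 fun j _ => hl j
    rw [Fintype.card_fin]
    omega
  have hcoeff := coeff_apply_of_eq_C_mul_add_C_mul_X_mul_derivative hD
  ext d
  rw [hF, coeff_pow_apply_of_coeff_apply hcoeff, coeff_mk, mul_assoc, coeff_C_mul]
  rcases d with _ | e
  · rw [giventalCoeff_zero, coeff_zero_X_mul, mul_zero, Nat.cast_zero, zero_mul, add_zero,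
      mul_left_comm, ← pow_add, hk, hP, mul_zero]
  · have hv := isUnit_add_natCast_mul ⟨n + 1, hP⟩ hu e.succ_ne_zero
    push_cast at hv ⊢
    rw [pow_mul_giventalCoeff_succ hl hk hv, coeff_succ_X_mul,
      coeff_aeval_apply_of_coeff_apply hcoeff, coeff_mk]
    simp [Polynomial.eval_prod, mul_assoc]

/-- Givental's theorem: for a complete intersection of multidegree `(l 1, …, l r)` in `ℙⁿ`
with `∑ l j < n`, the hypergeometric series `F = Σ Γ(d) Xᵈ` satisfies the Picard–Fuchs
equation written in the variable `q = eᵗ`, where `hbar d/dt` becomes `D = P + hbar·q·d/dq`. -/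
theorem givental_picard_fuchs_small_degree
    (n r : ℕ) (hr : 1 ≤ r) (l : Fin r → ℕ) (hl : ∀ j, 1 ≤ l j)
    (hsum : ∑ j, l j < n)
    (R : Type*) [CommRing R] [Algebra ℚ R] (hbar : R) (hu : IsUnit hbar)
    (P : R) (hP : P ^ (n + 1) = 0)
    (Γ : ℕ → R)
    (hΓ : ∀ d : ℕ, Γ d =
      (∏ j : Fin r, ∏ m ∈ Finset.range (d * l j + 1), ((l j : R) * P + (m : R) * hbar)) *
        (Ring.inverse (∏ m ∈ Finset.Icc 1 d, (P + (m : R) * hbar))) ^ (n + 1))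
    (F : PowerSeries R) (hF : F = PowerSeries.mk Γ)
    (D : Module.End R (PowerSeries R))
    (hD : ∀ f : PowerSeries R,
      D f = PowerSeries.C P * f + PowerSeries.C hbar * (PowerSeries.X * f.derivativeFun)) :
    (D ^ (n + 1 - r)) F =
      PowerSeries.C (∏ j : Fin r, (l j : R)) * PowerSeries.X *
        ((Polynomial.aeval D
            (∏ j : Fin r, ∏ m ∈ Finset.Icc 1 (l j - 1),
              (Polynomial.C (l j : R) * Polynomial.X + Polynomial.C ((m : R) * hbar)))) F) :=
  givental_picard_fuchs_small_degree_general n r l hl hsum R hbar hu P hP Γ hΓ F hF D hD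
end

section
/- Let n, r be natural numbers with r ≥ 1 and r ≤ n, and let l : Fin r → ℕ with each l_j ≥ 1 and l_1 + ⋯ + l_r = n + 1. Consider the formal power series f = Σ_{d≥0} ((∏_{j=1}^{r} (l_j·d)!) / (d!)^{n+1}) · X^d ∈ ℚ[[X]], and let θ : ℚ[[X]] → ℚ[[X]] be the operator θ(g) = X·g′, where g′ is the formal derivative. Then θ^{n+1-r}(f) = (∏_{j=1}^{r} l_j) · X · ((∏_{j=1}^{r} ∏_{m=1}^{l_j-1} (l_j·θ + m·id)) f), where the product of operators is composition. -/
/-!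
The operator `θ = X d/dX` acts diagonally on monomials, `θ Xᵈ = d Xᵈ`, so every polynomial `P(θ)`
multiplies the `d`-th coefficient by `P(d)`. The Picard–Fuchs equation is therefore the
coefficientwise recursion `(d + 1)^{n+1-r} a_{d+1} = (∏ l_j) ∏_j ∏_{m=1}^{l_j-1} (l_j d + m) a_d`
for `a_d = ∏ (l_j d)! / (d!)^{n+1}`, which comes from
`(l (d + 1))! = (l d)! · ∏_{m=1}^{l-1} (l d + m) · l (d + 1)`. In degree `0` both sides vanish
because `r ≤ n`.
-/

open Finset PowerSeries
open scoped Nat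

namespace Nat

theorem factorial_add_eq_mul_prod_Icc (a k : ℕ) :
    (a + k)! = a ! * ∏ m ∈ Icc 1 k, (a + m) := by
  induction k with
  | zero => simp
  | succ k ih =>
    rw [prod_Icc_succ_top (by omega), ← mul_assoc, ← ih, ← add_assoc, factorial_succ, mul_comm]

theorem factorial_mul_succ_eq (l e : ℕ) (hl : 1 ≤ l) :
    (l * (e + 1))! = (l * e)! * (∏ m ∈ Icc 1 (l - 1), (l * e + m)) * (l * (e + 1)) := by
  have h : l * (e + 1) = l * e + (l - 1) + 1 := by rw [mul_add_one]; omega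
  rw [h, factorial_succ, factorial_add_eq_mul_prod_Icc]
  ring

end Nat

section Theta

variable {R : Type*} [CommSemiring R] {θ : Module.End R R⟦X⟧}

theorem coeff_theta_apply (hθ : ∀ g, θ g = X * d⁄dX R g) (g : R⟦X⟧) (d : ℕ) :
    coeff d (θ g) = d * coeff d g := by
  rcases d with _ | d
  · simp [hθ]
  · rw [hθ, coeff_succ_X_mul, coeff_derivative]
    push_cast
    ring

theorem coeff_aeval_theta_apply (hθ : ∀ g, θ g = X * d⁄dX R g) (P : Polynomial R)
    (g : R⟦X⟧) (d : ℕ) :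
    coeff d (Polynomial.aeval θ P g) = P.eval (d : R) * coeff d g := by
  induction P using Polynomial.induction_on generalizing g with
  | C a => simp [Module.algebraMap_end_apply]
  | add p q hp hq => simp [hp, hq, add_mul]
  | monomial k a ih =>
    rw [pow_succ, ← mul_assoc, map_mul, Polynomial.aeval_X, Module.End.mul_apply, ih,
      coeff_theta_apply hθ]
    simp [mul_assoc]

theorem coeff_theta_pow_apply (hθ : ∀ g, θ g = X * d⁄dX R g) (k : ℕ) (g : R⟦X⟧) (d : ℕ) :
    coeff d ((θ ^ k) g) = (d : R) ^ k * coeff d g := by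
  simpa using coeff_aeval_theta_apply hθ (Polynomial.X ^ k) g d

end Theta

section Hypergeometric

variable {ι : Type*} [Fintype ι]

noncomputable def hypergeometricCoeff (n : ℕ) (l : ι → ℕ) (d : ℕ) : ℚ :=
  (∏ j, ((l j * d)! : ℚ)) / (d ! : ℚ) ^ (n + 1)

theorem hypergeometricCoeff_succ (n : ℕ) (l : ι → ℕ) (hl : ∀ j, 1 ≤ l j)
    (hcard : Fintype.card ι ≤ n + 1) (e : ℕ) :
    ((e : ℚ) + 1) ^ (n + 1 - Fintype.card ι) * hypergeometricCoeff n l (e + 1) =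
      (∏ j, (l j : ℚ)) * ((∏ j, ∏ m ∈ Icc 1 (l j - 1), ((l j : ℚ) * e + m)) *
        hypergeometricCoeff n l e) := by
  have hfact (j : ι) : ((l j * (e + 1))! : ℚ) =
      (l j * e)! * (∏ m ∈ Icc 1 (l j - 1), ((l j : ℚ) * e + m)) * ((l j : ℚ) * (e + 1)) := by
    exact_mod_cast Nat.factorial_mul_succ_eq (l j) e (hl j)
  have hpow : ((e : ℚ) + 1) ^ (n + 1) =
      ((e : ℚ) + 1) ^ (n + 1 - Fintype.card ι) * ((e : ℚ) + 1) ^ Fintype.card ι := by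
    rw [← pow_add, Nat.sub_add_cancel hcard]
  simp only [hypergeometricCoeff, hfact, prod_mul_distrib, prod_const, card_univ,
    Nat.factorial_succ, Nat.cast_mul, Nat.cast_succ, mul_pow, hpow]
  field_simp

end Hypergeometric

theorem givental_picard_fuchs_calabi_yau_general
    (n r : ℕ) (hrn : r ≤ n) (l : Fin r → ℕ) (hl : ∀ j, 1 ≤ l j)
    (f : PowerSeries ℚ)
    (hf : f = PowerSeries.mk fun d : ℕ =>
      ((∏ j : Fin r, ((l j * d).factorial : ℚ)) / ((d.factorial : ℚ)) ^ (n + 1)))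
    (θ : Module.End ℚ (PowerSeries ℚ))
    (hθ : ∀ g : PowerSeries ℚ, θ g = PowerSeries.X * g.derivativeFun) :
    (θ ^ (n + 1 - r)) f =
      PowerSeries.C (∏ j : Fin r, (l j : ℚ)) * PowerSeries.X *
        ((Polynomial.aeval θ
            (∏ j : Fin r, ∏ m ∈ Finset.Icc 1 (l j - 1),
              (Polynomial.C (l j : ℚ) * Polynomial.X + Polynomial.C (m : ℚ)))) f) := by
  have hθ' : ∀ g, θ g = X * d⁄dX ℚ g := hθ
  ext d
  rw [coeff_theta_pow_apply hθ', mul_assoc, coeff_C_mul]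
  rcases d with _ | e
  · simp [zero_pow (by omega : n + 1 - r ≠ 0)]
  · have hrec := hypergeometricCoeff_succ n l hl (by simp; omega) e
    rw [Fintype.card_fin] at hrec
    rw [coeff_succ_X_mul, coeff_aeval_theta_apply hθ',
      show f = mk (hypergeometricCoeff n l) from hf, coeff_mk, coeff_mk]
    simpa [Polynomial.eval_prod] using hrec

/-- For a Calabi–Yau complete intersection of multidegree `(l 1, …, l r)` in `ℙⁿ`
(`∑ l j = n + 1`), the hypergeometric series `f = Σ (∏ (l j · d)!)/(d!)^{n+1} Xᵈ`
satisfies the Picard–Fuchs equation `θ^{n+1-r} f = (∏ l j)·X·∏∏(l j·θ + m) f`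
where `θ = X d/dX`. -/
theorem givental_picard_fuchs_calabi_yau
    (n r : ℕ) (hr : 1 ≤ r) (hrn : r ≤ n) (l : Fin r → ℕ) (hl : ∀ j, 1 ≤ l j)
    (hsum : ∑ j, l j = n + 1)
    (f : PowerSeries ℚ)
    (hf : f = PowerSeries.mk fun d : ℕ =>
      ((∏ j : Fin r, ((l j * d).factorial : ℚ)) / ((d.factorial : ℚ)) ^ (n + 1)))
    (θ : Module.End ℚ (PowerSeries ℚ))
    (hθ : ∀ g : PowerSeries ℚ, θ g = PowerSeries.X * g.derivativeFun) :
    (θ ^ (n + 1 - r)) f =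
      PowerSeries.C (∏ j : Fin r, (l j : ℚ)) * PowerSeries.X *
        ((Polynomial.aeval θ
            (∏ j : Fin r, ∏ m ∈ Finset.Icc 1 (l j - 1),
              (Polynomial.C (l j : ℚ) * Polynomial.X + Polynomial.C (m : ℚ)))) f) :=
  givental_picard_fuchs_calabi_yau_general n r hrn l hl f hf θ hθ
end

section
/- Let F be a field of characteristic zero, let n ≥ 2 and d ≥ 1 and l ≥ 1 be natural numbers with l < n, let λ : Fin(n+1) → F, let μ ∈ F, and fix i ∈ Fin(n+1). Assume λ_α ≠ λ_i for all α ≠ i, and assume that for all pairs (α,m) ≠ (α',m') with α, α' ≠ i and 1 ≤ m, m' ≤ d one has m·(λ_{α'} − λ_i) ≠ m'·(λ_α − λ_i) (i.e. the elements m/(λ_α − λ_i) are pairwise distinct). Then for every ω ∈ F such that (λ_i − λ_α)·ω + m ≠ 0 for all α ≠ i and 1 ≤ m ≤ d, the following identity holds: (∏_{m=1}^{l·d}((l·λ_i − μ)·ω + m)) / (d! · ∏_{α≠i} ∏_{m=1}^{d}((λ_i − λ_α)·ω + m)) = Σ_{j≠i} Σ_{a=1}^{d} ((λ_i − λ_j)·ω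 + a)⁻¹ · (∏_{m=1}^{l·d}((l·λ_i − μ)·a·(λ_j − λ_i)⁻¹ + m)) / (d! · ∏_{(α,m) ≠ (j,a), α≠i, 1≤m≤d}((λ_i − λ_α)·a·(λ_j − λ_i)⁻¹ + m)). -/
open Finset Polynomial

lemma my_partial_fractions {F : Type*} [Field F] {ι : Type*} [DecidableEq ι]
    (S : Finset ι) (b c : ι → F) (hb : ∀ p ∈ S, b p ≠ 0)
    (x : ι → F) (hx : ∀ p ∈ S, b p * x p + c p = 0)
    (hinj : ∀ p ∈ S, ∀ q ∈ S, x p = x q → p = q)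
    (P : F[X]) (hdeg : P.natDegree < S.card)
    (ω : F) (hω : ∀ p ∈ S, b p * ω + c p ≠ 0) :
    P.eval ω / ∏ p ∈ S, (b p * ω + c p) =
      ∑ p ∈ S, (b p * ω + c p)⁻¹ *
        (P.eval (x p) / ∏ q ∈ S.erase p, (b q * x p + c q)) := by
  classical
  have hne : ∀ p ∈ S, ∀ q ∈ S, p ≠ q → b q * x p + c q ≠ 0 := by
    intro p hp q hq hpq h
    have h2 := hx q hq
    have : b q * (x p - x q) = 0 := by ring_nf; linear_combination h - h2
    rcases mul_eq_zero.1 this with h3 | h3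
    · exact hb q hq h3
    · exact hpq (hinj p hp q hq (sub_eq_zero.1 h3))
  have hDp : ∀ p ∈ S, (∏ q ∈ S.erase p, (b q * x p + c q)) ≠ 0 := by
    intro p hp
    exact Finset.prod_ne_zero_iff.2 fun q hq =>
      hne p hp q (Finset.mem_of_mem_erase hq) (Ne.symm (Finset.mem_erase.1 hq).1)
  set cf : ι → F := fun p => P.eval (x p) / ∏ q ∈ S.erase p, (b q * x p + c q) with hcf
  set N : F[X] := ∑ p ∈ S, C (cf p) * ∏ q ∈ S.erase p, (C (b q) * X + C (c q)) with hN
  have hevalN : ∀ p ∈ S, N.eval (x p) = P.eval (x p) := by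
    intro p hp
    rw [hN, eval_finset_sum]
    rw [Finset.sum_eq_single p]
    · simp only [eval_mul, eval_C, eval_prod, eval_add, eval_mul, eval_X]
      rw [hcf]
      exact div_mul_cancel₀ _ (hDp p hp)
    · intro q hq hqp
      have : (∏ r ∈ S.erase q, (C (b r) * X + C (c r))).eval (x p) = 0 := by
        rw [eval_prod]
        apply Finset.prod_eq_zero (Finset.mem_erase.2 ⟨fun h => hqp h.symm, hp⟩)
        simp [hx p hp]
      simp [this]
    · intro h; exact absurd hp h
  have hkey : P = N := by
    have hScard : 1 ≤ S.card := Nat.one_le_iff_ne_zero.2 (by rintro h; omega)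
    have hdegN : N.natDegree ≤ S.card - 1 := by
      apply Polynomial.natDegree_sum_le_of_forall_le
      intro p hp
      refine le_trans (natDegree_C_mul_le _ _) ?_
      refine le_trans (natDegree_prod_le _ _) ?_
      have h1 : ∀ q ∈ S.erase p, (C (b q) * X + C (c q)).natDegree ≤ 1 :=
        fun q _ => natDegree_linear_le
      have h2 := Finset.sum_le_card_nsmul _ _ _ h1
      rw [Finset.card_erase_of_mem hp] at h2
      simpa using h2
    have hzero : P - N = 0 := by
      by_cases h0 : P - N = 0
      · exact h0
      apply Polynomial.eq_zero_of_natDegree_lt_card_of_eval_eq_zero' (P - N) (S.image x)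
      · intro y hy
        obtain ⟨p, hp, rfl⟩ := Finset.mem_image.1 hy
        simp [eval_sub, hevalN p hp]
      · rw [Finset.card_image_of_injOn fun p hp q hq => hinj p hp q hq]
        calc (P - N).natDegree ≤ max P.natDegree N.natDegree := natDegree_sub_le _ _
          _ < S.card := by omega
    exact sub_eq_zero.1 hzero
  have hP : P.eval ω = ∑ p ∈ S, cf p * ∏ q ∈ S.erase p, (b q * ω + c q) := by
    rw [hkey, hN, eval_finset_sum]
    refine Finset.sum_congr rfl fun p hp => ?_
    simp [eval_prod]
  have hD : (∏ p ∈ S, (b p * ω + c p)) ≠ 0 := Finset.prod_ne_zero_iff.2 hω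
  rw [hP, Finset.sum_div]
  refine Finset.sum_congr rfl fun p hp => ?_
  rw [← Finset.mul_prod_erase S _ hp]
  have h1 : b p * ω + c p ≠ 0 := hω p hp
  have h2 : (∏ q ∈ S.erase p, (b q * ω + c q)) ≠ 0 :=
    Finset.prod_ne_zero_iff.2 fun q hq => hω q (Finset.mem_of_mem_erase hq)
  rw [mul_comm (b p * ω + c p) (∏ q ∈ S.erase p, (b q * ω + c q)), ← div_div,
    mul_div_cancel_right₀ _ h2, div_eq_inv_mul]

/-- Givental's decomposition into simple fractions of the hypergeometric coefficients
`C_i(d, 1/ω)` of the series `z_i(Q, 1/ω)` (hypersurface of degree `l < n` in `ℙⁿ`). -/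
theorem givental_simple_fraction_decomposition
    (F : Type*) [Field F] [CharZero F] (n d l : ℕ)
    (hn : 2 ≤ n) (hd : 1 ≤ d) (hl : 1 ≤ l) (hln : l < n)
    (lam : Fin (n + 1) → F) (μ : F) (i : Fin (n + 1))
    (hlam : ∀ α : Fin (n + 1), α ≠ i → lam α ≠ lam i)
    (hdist : ∀ α α' : Fin (n + 1), α ≠ i → α' ≠ i →
      ∀ m m' : ℕ, 1 ≤ m → m ≤ d → 1 ≤ m' → m' ≤ d →
        ((α, m) : Fin (n + 1) × ℕ) ≠ (α', m') →
        (m : F) * (lam α' - lam i) ≠ (m' : F) * (lam α - lam i))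
    (ω : F)
    (hω : ∀ α : Fin (n + 1), α ≠ i → ∀ m : ℕ, 1 ≤ m → m ≤ d →
      (lam i - lam α) * ω + (m : F) ≠ 0) :
    (∏ m ∈ Finset.Icc 1 (l * d), (((l : F) * lam i - μ) * ω + (m : F))) /
        ((d.factorial : F) *
          ∏ α ∈ Finset.univ.erase i, ∏ m ∈ Finset.Icc 1 d,
            ((lam i - lam α) * ω + (m : F))) =
      ∑ j ∈ Finset.univ.erase i, ∑ a ∈ Finset.Icc 1 d,
        ((lam i - lam j) * ω + (a : F))⁻¹ *
          ((∏ m ∈ Finset.Icc 1 (l * d),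
              (((l : F) * lam i - μ) * (a : F) * (lam j - lam i)⁻¹ + (m : F))) /
            ((d.factorial : F) *
              ∏ p ∈ ((Finset.univ.erase i) ×ˢ Finset.Icc 1 d).erase (j, a),
                ((lam i - lam p.1) * (a : F) * (lam j - lam i)⁻¹ + (p.2 : F)))) := by
  classical
  set S : Finset (Fin (n + 1) × ℕ) := (Finset.univ.erase i) ×ˢ Finset.Icc 1 d with hS
  have hmem : ∀ p : Fin (n + 1) × ℕ, p ∈ S ↔ p.1 ≠ i ∧ 1 ≤ p.2 ∧ p.2 ≤ d := by
    intro p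
    simp [hS, Finset.mem_product, Finset.mem_erase, Finset.mem_Icc, and_assoc]
  set b : Fin (n + 1) × ℕ → F := fun p => lam i - lam p.1 with hbdef
  set c : Fin (n + 1) × ℕ → F := fun p => (p.2 : F) with hcdef
  set x : Fin (n + 1) × ℕ → F := fun p => (p.2 : F) * (lam p.1 - lam i)⁻¹ with hxdef
  set P : Polynomial F :=
    ∏ m ∈ Finset.Icc 1 (l * d), (Polynomial.C ((l : F) * lam i - μ) * Polynomial.X +
      Polynomial.C (m : F)) with hPdef
  have hsub : ∀ p : Fin (n + 1) × ℕ, p ∈ S → lam p.1 - lam i ≠ 0 := by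
    intro p hp
    exact sub_ne_zero.2 (hlam p.1 ((hmem p).1 hp).1)
  have hb : ∀ p ∈ S, b p ≠ 0 := by
    intro p hp
    exact sub_ne_zero.2 (Ne.symm (hlam p.1 ((hmem p).1 hp).1))
  have hx : ∀ p ∈ S, b p * x p + c p = 0 := by
    intro p hp
    have h := hsub p hp
    simp only [hbdef, hcdef, hxdef]
    field_simp
    ring
  have hinj : ∀ p ∈ S, ∀ q ∈ S, x p = x q → p = q := by
    intro p hp q hq hxy
    by_contra hne
    obtain ⟨h1, h2, h3⟩ := (hmem p).1 hp
    obtain ⟨h4, h5, h6⟩ := (hmem q).1 hq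
    refine hdist p.1 q.1 h1 h4 p.2 q.2 h2 h3 h5 h6 (by simpa using hne) ?_
    have hp' := hsub p hp
    have hq' := hsub q hq
    simp only [hxdef] at hxy
    field_simp at hxy
    linear_combination hxy
  have hω' : ∀ p ∈ S, b p * ω + c p ≠ 0 := by
    intro p hp
    obtain ⟨h1, h2, h3⟩ := (hmem p).1 hp
    exact hω p.1 h1 p.2 h2 h3
  have hcardS : S.card = n * d := by
    rw [hS, Finset.card_product, Finset.card_erase_of_mem (Finset.mem_univ i)]
    simp [Nat.card_Icc]
  have hdeg : P.natDegree < S.card := by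
    have h1 : ∀ m ∈ Finset.Icc 1 (l * d),
        (Polynomial.C ((l : F) * lam i - μ) * Polynomial.X +
          Polynomial.C (m : F)).natDegree ≤ 1 := fun m _ => Polynomial.natDegree_linear_le
    have h2 := Finset.sum_le_card_nsmul _ _ _ h1
    have h3 := Polynomial.natDegree_prod_le (Finset.Icc 1 (l * d))
      (fun m => Polynomial.C ((l : F) * lam i - μ) * Polynomial.X + Polynomial.C (m : F))
    rw [Nat.card_Icc] at h2
    simp only [smul_eq_mul, mul_one] at h2
    have h4 : P.natDegree ≤ l * d := by
      rw [hPdef]; exact le_trans h3 (by omega)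
    have h5 : l * d < n * d := Nat.mul_lt_mul_of_lt_of_le hln (le_refl d) (by omega)
    omega
  have main := my_partial_fractions S b c hb x hx hinj P hdeg ω hω'
  have hPev : ∀ t : F, P.eval t =
      ∏ m ∈ Finset.Icc 1 (l * d), (((l : F) * lam i - μ) * t + (m : F)) := by
    intro t
    simp [hPdef, Polynomial.eval_prod]
  have hfac : (d.factorial : F) ≠ 0 := Nat.cast_ne_zero.2 d.factorial_ne_zero
  have hsplit : ∀ A D : F, A / ((d.factorial : F) * D) = (d.factorial : F)⁻¹ * (A / D) := by
    intro A D
    rw [div_eq_mul_inv, mul_inv, div_eq_mul_inv]; ring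
  have hprodD : (∏ p ∈ S, (b p * ω + c p)) = ∏ α ∈ Finset.univ.erase i,
      ∏ m ∈ Finset.Icc 1 d, ((lam i - lam α) * ω + (m : F)) := by
    simp only [hbdef, hcdef, hS]
    exact Finset.prod_product' (Finset.univ.erase i) (Finset.Icc 1 d) (fun α m => (lam i - lam α) * ω + (m : F))
  rw [← hprodD, hsplit, ← hPev, main, ← Finset.sum_product']
  rw [Finset.mul_sum]
  refine Finset.sum_congr rfl fun p hp => ?_
  simp only [hbdef, hcdef, hxdef, hS, hPev, Prod.mk.eta]
  have eN : (∏ m ∈ Finset.Icc 1 (l * d),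
        (((l : F) * lam i - μ) * ((p.2 : F) * (lam p.1 - lam i)⁻¹) + (m : F))) =
      ∏ m ∈ Finset.Icc 1 (l * d),
        (((l : F) * lam i - μ) * (p.2 : F) * (lam p.1 - lam i)⁻¹ + (m : F)) :=
    Finset.prod_congr rfl fun m _ => by ring
  have eD : (∏ q ∈ ((Finset.univ.erase i) ×ˢ Finset.Icc 1 d).erase p,
        ((lam i - lam q.1) * ((p.2 : F) * (lam p.1 - lam i)⁻¹) + (q.2 : F))) =
      ∏ q ∈ ((Finset.univ.erase i) ×ˢ Finset.Icc 1 d).erase p,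
        ((lam i - lam q.1) * (p.2 : F) * (lam p.1 - lam i)⁻¹ + (q.2 : F)) :=
    Finset.prod_congr rfl fun q _ => by ring
  rw [eN, eD, hsplit]
  ring
end

section
/- Let F be a field, let n, r be natural numbers with r ≥ 1, let λ : Fin(n+1) → F be injective, let μ : Fin r → F, and let l : Fin r → ℕ with each l_a ≥ 1 and l_1 + ⋯ + l_r = n. Fix i ∈ Fin(n+1). Then Σ_{j≠i} (∏_{a=1}^{r} ∏_{m=1}^{l_a} ((l_a·λ_i − μ_a) + m·(λ_j − λ_i))) / (∏_{α≠j}(λ_j − λ_α)) = ∏_{a=1}^{r} (l_a)! − (∏_{a=1}^{r} (l_a·λ_i − μ_a)^{l_a}) / (∏_{α≠i}(λ_i − λ_α)), where natural numbers act through the canonical map ℕ → F. -/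
open Finset
open Polynomial

lemma prod_Icc_one_eq_factorial (k : ℕ) : ∏ m ∈ Finset.Icc 1 k, m = k.factorial := by
  induction k with
  | zero => simp
  | succ k ih => rw [Finset.prod_Icc_succ_top (by omega), ih, Nat.factorial_succ, mul_comm]

/-- Givental's residue computation for the degenerate fixed-point contributions:
for a complete intersection of multidegree `(l 1, …, l r)` in `ℙⁿ` with `∑ l a = n`. -/
theorem givental_residue_sum_degree_n
    (F : Type*) [Field F] (n r : ℕ) (hr : 1 ≤ r)
    (lam : Fin (n + 1) → F) (hinj : Function.Injective lam)
    (μ : Fin r → F) (l : Fin r → ℕ) (hl : ∀ a, 1 ≤ l a) (hsum : ∑ a, l a = n)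
    (i : Fin (n + 1)) :
    ∑ j ∈ Finset.univ.erase i,
        (∏ a : Fin r, ∏ m ∈ Finset.Icc 1 (l a),
            ((l a : F) * lam i - μ a + (m : F) * (lam j - lam i))) /
          (∏ α ∈ Finset.univ.erase j, (lam j - lam α)) =
      (∏ a : Fin r, ((l a).factorial : F)) -
        (∏ a : Fin r, ((l a : F) * lam i - μ a) ^ (l a)) /
          (∏ α ∈ Finset.univ.erase i, (lam i - lam α)) := by
  classical
  have hinjOn : Set.InjOn lam (Finset.univ : Finset (Fin (n+1))) := hinj.injOn
  set P : Polynomial F := ∏ a : Fin r, ∏ m ∈ Finset.Icc 1 (l a),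
      (C ((l a : F) * lam i - μ a) + C (m : F) * (X - C (lam i))) with hP
  set S : Finset ((_ : Fin r) × ℕ) := Finset.univ.sigma (fun a => Finset.Icc 1 (l a)) with hS
  have hcardS : S.card = n := by
    rw [hS, Finset.card_sigma]
    simpa using hsum
  have hPflat : P = ∏ p ∈ S,
      (C ((l p.1 : F) * lam i - μ p.1) + C ((p.2 : F)) * (X - C (lam i))) := by
    rw [hP, hS, Finset.prod_sigma]
  have hdeg1 : ∀ p ∈ S,
      (C ((l p.1 : F) * lam i - μ p.1) + C ((p.2 : F)) * (X - C (lam i))).natDegree ≤ 1 := by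
    intro p _
    compute_degree
  have hcoeff1 : ∀ p : (_ : Fin r) × ℕ,
      (C ((l p.1 : F) * lam i - μ p.1) + C ((p.2 : F)) * (X - C (lam i))).coeff 1 = (p.2 : F) := by
    intro p
    simp [coeff_add, mul_sub, coeff_sub, coeff_C_mul, coeff_C]
  -- the leading (degree n) coefficient of P
  have hcoeffP : P.coeff n = ∏ a : Fin r, ((l a).factorial : F) := by
    have := coeff_prod_of_natDegree_le
      (f := fun p : (_ : Fin r) × ℕ =>
        (C ((l p.1 : F) * lam i - μ p.1) + C ((p.2 : F)) * (X - C (lam i))))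
      (s := S) 1 hdeg1
    rw [hcardS, mul_one] at this
    rw [hPflat, this, hS, Finset.prod_sigma]
    refine Finset.prod_congr rfl fun a _ => ?_
    rw [← prod_Icc_one_eq_factorial, Nat.cast_prod]
    exact Finset.prod_congr rfl fun m _ => hcoeff1 ⟨a, m⟩
  -- degree bound
  have hdegP : P.degree < ((Finset.univ : Finset (Fin (n+1))).card : WithBot ℕ) := by
    have h1 : P.natDegree ≤ n := by
      rw [hPflat]
      calc (∏ p ∈ S, (C ((l p.1 : F) * lam i - μ p.1) + C ((p.2 : F)) * (X - C (lam i)))).natDegree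
          ≤ ∑ p ∈ S, (C ((l p.1 : F) * lam i - μ p.1) + C ((p.2 : F)) * (X - C (lam i))).natDegree :=
            by exact natDegree_prod_le _ _
        _ ≤ ∑ _p ∈ S, 1 := by exact Finset.sum_le_sum hdeg1
        _ = n := by rw [Finset.sum_const, smul_eq_mul, mul_one, hcardS]
    calc P.degree ≤ (P.natDegree : WithBot ℕ) := degree_le_natDegree
      _ ≤ (n : WithBot ℕ) := by exact_mod_cast h1
      _ < _ := by
          rw [Finset.card_univ, Fintype.card_fin]
          exact_mod_cast Nat.lt_succ_self n
  -- Lagrange interpolation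
  have hinterp : P = Lagrange.interpolate Finset.univ lam (fun j => P.eval (lam j)) :=
    Lagrange.eq_interpolate hinjOn hdegP
  -- leading coefficient of each basis polynomial
  have hbasis : ∀ j : Fin (n+1),
      (Lagrange.basis Finset.univ lam j).coeff n = (∏ α ∈ Finset.univ.erase j, (lam j - lam α))⁻¹ := by
    intro j
    have hmem : j ∈ (Finset.univ : Finset (Fin (n+1))) := Finset.mem_univ j
    have hnd : (Lagrange.basis Finset.univ lam j).natDegree = n := by
      rw [Lagrange.natDegree_basis hinjOn hmem, Finset.card_univ, Fintype.card_fin]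
      simp
    have hlc := Polynomial.coeff_natDegree (p := Lagrange.basis Finset.univ lam j)
    rw [hnd] at hlc
    rw [hlc, Lagrange.basis, Polynomial.leadingCoeff_prod, ← Finset.prod_inv_distrib]
    refine Finset.prod_congr rfl fun α hα => ?_
    have hne : lam j - lam α ≠ 0 := by
      rw [sub_ne_zero]
      exact fun h => (Finset.mem_erase.mp hα).1 (hinj h.symm)
    rw [Lagrange.basisDivisor, leadingCoeff_mul, leadingCoeff_C,
      (monic_X_sub_C (lam α)).leadingCoeff, mul_one]
  -- sum over all nodes = coefficient n
  have hsumall : ∑ j : Fin (n+1),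
      P.eval (lam j) / (∏ α ∈ Finset.univ.erase j, (lam j - lam α)) = P.coeff n := by
    conv_rhs => rw [hinterp]
    rw [Lagrange.interpolate_apply, Polynomial.finset_sum_coeff]
    refine Finset.sum_congr rfl fun j _ => ?_
    rw [Polynomial.coeff_C_mul, hbasis j, div_eq_mul_inv]
  -- evaluations
  have heval : ∀ j : Fin (n+1), P.eval (lam j) =
      ∏ a : Fin r, ∏ m ∈ Finset.Icc 1 (l a),
        ((l a : F) * lam i - μ a + (m : F) * (lam j - lam i)) := by
    intro j
    rw [hP]
    simp [eval_prod]
  have hevali : P.eval (lam i) = ∏ a : Fin r, ((l a : F) * lam i - μ a) ^ (l a) := by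
    rw [heval i]
    refine Finset.prod_congr rfl fun a _ => ?_
    have : ∀ m ∈ Finset.Icc 1 (l a), (l a : F) * lam i - μ a + (m : F) * (lam i - lam i)
        = (l a : F) * lam i - μ a := fun m _ => by ring
    rw [Finset.prod_congr rfl this, Finset.prod_const, Nat.card_Icc]
    simp
  -- conclude
  have hsplit := Finset.sum_erase_add Finset.univ
    (fun j => P.eval (lam j) / (∏ α ∈ Finset.univ.erase j, (lam j - lam α))) (Finset.mem_univ i)
  rw [hsumall, hcoeffP] at hsplit
  have : ∑ j ∈ Finset.univ.erase i,
      P.eval (lam j) / (∏ α ∈ Finset.univ.erase j, (lam j - lam α)) =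
      (∏ a : Fin r, ((l a).factorial : F)) -
        P.eval (lam i) / (∏ α ∈ Finset.univ.erase i, (lam i - lam α)) :=
    eq_sub_of_add_eq hsplit
  rw [hevali] at this
  rw [← this]
  exact Finset.sum_congr rfl fun j _ => by rw [heval j]
end

section
/- Let F be a field, let n, r, d be natural numbers with r ≥ 1, let λ : Fin(n+1) → F be injective, let μ : Fin r → F, let l : Fin r → ℕ with each l_a ≥ 1, fix i ∈ Fin(n+1), and let ħ ∈ F satisfy: m·ħ ≠ 0, λ_i − λ_α + m·ħ ≠ 0, and λ_i − λ_α − m·ħ ≠ 0 for all α ≠ i and all 1 ≤ m ≤ d. For k ∈ ℕ and h ∈ F define C(k,h) = (∏_{a=1}^{r} ∏_{m=1}^{l_a·k} (l_a·λ_i − μ_a + m·h)) / (∏_{α ∈ Fin(n+1)} ∏_{m=1}^{k} (λ_i − λ_α + m·h)). Then for every s with 0 ≤ s ≤ d: ((∏_{a=1}^{r}(l_a·λ_i − μ_a)) / (∏_{j≠i}(λ_i − λ_j))) · C(s,ħ) · C(d−s,−ħ) = (∏_{a=1}^{r} ∏_{m=0}^{l_a·d} (l_a·λ_i − μ_a +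 (l_a·s − m)·ħ)) / (∏_{(α,m) ≠ (i,s), α ∈ Fin(n+1), 0 ≤ m ≤ d} (λ_i − λ_α + (s − m)·ħ)), where integers act through the canonical map ℤ → F. -/
open Finset

/-!
Splitting `0 ≤ m ≤ D` at `m = s` and reflecting the lower half, the factor `c + (s - m) ħ` runs
through `c + m ħ` for `1 ≤ m ≤ s`, then `c` itself, then `c - m ħ` for `1 ≤ m ≤ D - s`. For the
numerator (`D = l_a d`, `s` replaced by `l_a s`) and the denominator (whose omitted factor `(i, s)`
is the vanishing one) this factors the right side as the prefactor times `C(s, ħ) C(d - s, -ħ)`.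
-/

theorem prod_product_erase {ι κ M : Type*} [CommMonoid M] [DecidableEq ι] [DecidableEq κ]
    {s : Finset ι} {i : ι} (hi : i ∈ s) (t : Finset κ) (k : κ) (f : ι × κ → M) :
    ∏ p ∈ (s ×ˢ t).erase (i, k), f p =
      (∏ j ∈ s.erase i, ∏ m ∈ t, f (j, m)) * ∏ m ∈ t.erase k, f (i, m) := by
  have hsplit : (s ×ˢ t).erase (i, k) = (s.erase i ×ˢ t) ∪ ({i} ×ˢ t.erase k) := by
    ext ⟨j, m⟩
    by_cases hj : j = i <;> aesop
  have hdisj : Disjoint (s.erase i ×ˢ t) ({i} ×ˢ t.erase k) := by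
    simp only [disjoint_left, mem_product, mem_erase, mem_singleton]
    rintro ⟨j, m⟩ ⟨⟨hji, -⟩, -⟩ ⟨rfl, -⟩
    exact hji rfl
  rw [hsplit, prod_union hdisj, prod_product, prod_product, prod_singleton]

section Shift

variable {R ι : Type*} [CommRing R] [Fintype ι]

theorem prod_range_erase_shift (c h : R) {s d : ℕ} (hs : s ≤ d) :
    ∏ m ∈ (range (d + 1)).erase s, (c + (((s : ℤ) - m : ℤ) : R) * h) =
      (∏ m ∈ Icc 1 s, (c + m * h)) * ∏ m ∈ Icc 1 (d - s), (c + m * -h) := by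
  have hsplit : (range (d + 1)).erase s = range s ∪ Ioc s d := by
    ext m; simp only [mem_erase, mem_range, mem_union, mem_Ioc]; omega
  have hdisj : Disjoint (range s) (Ioc s d) := by
    simp only [disjoint_left, mem_range, mem_Ioc]; omega
  rw [hsplit, prod_union hdisj]
  congr 1
  · refine prod_nbij' (s - ·) (s - ·) ?_ ?_ ?_ ?_ ?_ <;> intro m hm <;>
      simp only [mem_range, mem_Icc] at hm ⊢
    all_goals first | omega | push_cast [Nat.cast_sub hm.le]; ring
  · refine prod_nbij' (· - s) (· + s) ?_ ?_ ?_ ?_ ?_ <;> intro m hm <;>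
      simp only [mem_Ioc, mem_Icc] at hm ⊢
    all_goals first | omega | push_cast [Nat.cast_sub hm.1.le]; ring

theorem prod_range_shift (c h : R) {s d : ℕ} (hs : s ≤ d) :
    ∏ m ∈ range (d + 1), (c + (((s : ℤ) - m : ℤ) : R) * h) =
      (∏ m ∈ Icc 1 s, (c + m * h)) * c * ∏ m ∈ Icc 1 (d - s), (c + m * -h) := by
  rw [← mul_prod_erase _ _ (mem_range.2 (Nat.lt_succ_of_le hs)), prod_range_erase_shift c h hs]
  simp only [sub_self, Int.cast_zero, zero_mul, add_zero]
  ring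

theorem prod_prod_range_mul_shift (c : ι → R) (l : ι → ℕ) (h : R) {s d : ℕ} (hs : s ≤ d) :
    ∏ a, ∏ m ∈ range (l a * d + 1), (c a + ((((l a * s : ℕ) : ℤ) - m : ℤ) : R) * h) =
      (∏ a, ∏ m ∈ Icc 1 (l a * s), (c a + m * h)) * (∏ a, c a) *
        ∏ a, ∏ m ∈ Icc 1 (l a * (d - s)), (c a + m * -h) := by
  simp only [← prod_mul_distrib, Nat.mul_sub]
  exact prod_congr rfl fun a _ => prod_range_shift (c a) h (Nat.mul_le_mul_left _ hs)

theorem prod_product_range_erase_shift [DecidableEq ι] (c : ι → R) (i : ι) (h : R) {s d : ℕ}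
    (hs : s ≤ d) :
    ∏ p ∈ (univ ×ˢ range (d + 1)).erase (i, s), (c p.1 + (((s : ℤ) - p.2 : ℤ) : R) * h) =
      (∏ j ∈ univ.erase i, c j) * (∏ α, ∏ m ∈ Icc 1 s, (c α + m * h)) *
        ∏ α, ∏ m ∈ Icc 1 (d - s), (c α + m * -h) := by
  rw [prod_product_erase (mem_univ i)]
  dsimp only
  rw [prod_range_erase_shift _ h hs, prod_congr rfl fun j _ => prod_range_shift (c j) h hs,
    prod_mul_distrib, prod_mul_distrib, ← mul_prod_erase univ _ (mem_univ i),
    ← mul_prod_erase univ (fun α => ∏ m ∈ Icc 1 (d - s), (c α + m * -h)) (mem_univ i)]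
  ring

end Shift

theorem givental_correlator_coefficient_identity_general
    (F : Type*) [Field F] (n r d : ℕ)
    (lam : Fin (n + 1) → F)
    (μ : Fin r → F) (l : Fin r → ℕ)
    (i : Fin (n + 1)) (hbar : F)
    (C : ℕ → F → F)
    (hC : ∀ (k : ℕ) (h : F), C k h =
      (∏ a : Fin r, ∏ m ∈ Finset.Icc 1 (l a * k), ((l a : F) * lam i - μ a + (m : F) * h)) /
        (∏ α : Fin (n + 1), ∏ m ∈ Finset.Icc 1 k, (lam i - lam α + (m : F) * h)))
    (s : ℕ) (hs : s ≤ d) :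
    ((∏ a : Fin r, ((l a : F) * lam i - μ a)) /
        (∏ j ∈ Finset.univ.erase i, (lam i - lam j))) * C s hbar * C (d - s) (-hbar) =
      (∏ a : Fin r, ∏ m ∈ Finset.range (l a * d + 1),
          ((l a : F) * lam i - μ a + ((((l a * s : ℕ) : ℤ) - (m : ℤ) : ℤ) : F) * hbar)) /
        (∏ p ∈ (Finset.univ ×ˢ Finset.range (d + 1)).erase
            ((i, s) : Fin (n + 1) × ℕ),
          (lam i - lam p.1 + (((s : ℤ) - (p.2 : ℤ) : ℤ) : F) * hbar)) := by
  rw [hC, hC, prod_prod_range_mul_shift (fun a => (l a : F) * lam i - μ a) l hbar hs,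
    prod_product_range_erase_shift (fun α => lam i - lam α) i hbar hs]
  ring

/-- Product-rearrangement identity for the coefficients `C_i*(k, h)` of Givental's
hypergeometric series, the computational core of the polynomiality of the correlator. -/
theorem givental_correlator_coefficient_identity
    (F : Type*) [Field F] (n r d : ℕ) (hr : 1 ≤ r)
    (lam : Fin (n + 1) → F) (hinj : Function.Injective lam)
    (μ : Fin r → F) (l : Fin r → ℕ) (hl : ∀ a, 1 ≤ l a)
    (i : Fin (n + 1)) (hbar : F)
    (hb : ∀ m : ℕ, 1 ≤ m → m ≤ d → (m : F) * hbar ≠ 0)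
    (hb' : ∀ α : Fin (n + 1), α ≠ i → ∀ m : ℕ, 1 ≤ m → m ≤ d →
      lam i - lam α + (m : F) * hbar ≠ 0)
    (hb'' : ∀ α : Fin (n + 1), α ≠ i → ∀ m : ℕ, 1 ≤ m → m ≤ d →
      lam i - lam α - (m : F) * hbar ≠ 0)
    (C : ℕ → F → F)
    (hC : ∀ (k : ℕ) (h : F), C k h =
      (∏ a : Fin r, ∏ m ∈ Finset.Icc 1 (l a * k), ((l a : F) * lam i - μ a + (m : F) * h)) /
        (∏ α : Fin (n + 1), ∏ m ∈ Finset.Icc 1 k, (lam i - lam α + (m : F) * h)))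
    (s : ℕ) (hs : s ≤ d) :
    ((∏ a : Fin r, ((l a : F) * lam i - μ a)) /
        (∏ j ∈ Finset.univ.erase i, (lam i - lam j))) * C s hbar * C (d - s) (-hbar) =
      (∏ a : Fin r, ∏ m ∈ Finset.range (l a * d + 1),
          ((l a : F) * lam i - μ a + ((((l a * s : ℕ) : ℤ) - (m : ℤ) : ℤ) : F) * hbar)) /
        (∏ p ∈ (Finset.univ ×ˢ Finset.range (d + 1)).erase
            ((i, s) : Fin (n + 1) × ℕ),
          (lam i - lam p.1 + (((s : ℤ) - (p.2 : ℤ) : ℤ) : F) * hbar)) :=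
  givental_correlator_coefficient_identity_general F n r d lam μ l i hbar C hC s hs
end

section
/- Let R be a commutative ring, let n, d be natural numbers, let λ : Fin(n+1) → R, let ħ ∈ R, fix i ∈ Fin(n+1), and let k be a natural number with k ≤ d. Then ∏_{(α,s) ≠ (i,k), α ∈ Fin(n+1), 0 ≤ s ≤ d} (λ_i − λ_α + (k − s)·ħ) = (∏_{α≠i}(λ_i − λ_α)) · k! · ħ^k · (∏_{α≠i} ∏_{s=1}^{k} (λ_i − λ_α + s·ħ)) · (d−k)! · (−ħ)^{d−k} · (∏_{α≠i} ∏_{s=1}^{d−k} (λ_i − λ_α − s·ħ)), where the integer k − s acts through the canonical map ℤ → R and the factorials through ℕ → R. -/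
open Finset

private lemma icc_prod_eq_range {R : Type*} [CommRing R] (f : ℕ → R) (m : ℕ) :
    ∏ j ∈ Finset.Icc 1 m, f j = ∏ j ∈ Finset.range m, f (1 + j) := by
  rw [← Finset.Ico_add_one_right_eq_Icc, Finset.prod_Ico_eq_prod_range]
  simp

private lemma row_erase {R : Type*} [CommRing R] (c h : R) (k d : ℕ) (hk : k ≤ d) :
    ∏ s ∈ (Finset.range (d + 1)).erase k, (c + ((k : R) - (s : R)) * h)
      = (∏ j ∈ Finset.Icc 1 k, (c + (j : R) * h)) *
        (∏ j ∈ Finset.Icc 1 (d - k), (c - (j : R) * h)) := by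
  have hset : (Finset.range (d + 1)).erase k
      = Finset.range k ∪ Finset.Ico (k + 1) (d + 1) := by
    ext s
    simp only [Finset.mem_erase, Finset.mem_range, Finset.mem_union, Finset.mem_Ico]
    omega
  have hdisj : Disjoint (Finset.range k) (Finset.Ico (k + 1) (d + 1)) := by
    rw [Finset.disjoint_left]
    intro s hs hs'
    simp only [Finset.mem_range] at hs
    simp only [Finset.mem_Ico] at hs'
    omega
  rw [hset, Finset.prod_union hdisj]
  congr 1
  · rw [icc_prod_eq_range]
    rw [← Finset.prod_range_reflect]
    apply Finset.prod_congr rfl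
    intro j hj
    rw [Finset.mem_range] at hj
    congr 1
    congr 1
    have h1 : (k - 1 - j : ℕ) = k - (1 + j) := by omega
    rw [h1, Nat.cast_sub (by omega : 1 + j ≤ k)]
    push_cast
    ring
  · rw [Finset.prod_Ico_eq_prod_range, icc_prod_eq_range]
    have hd : d + 1 - (k + 1) = d - k := by omega
    rw [hd]
    apply Finset.prod_congr rfl
    intro j hj
    push_cast
    ring

private lemma row_full {R : Type*} [CommRing R] (c h : R) (k d : ℕ) (hk : k ≤ d) :
    ∏ s ∈ Finset.range (d + 1), (c + ((k : R) - (s : R)) * h)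
      = c * ((∏ j ∈ Finset.Icc 1 k, (c + (j : R) * h)) *
        (∏ j ∈ Finset.Icc 1 (d - k), (c - (j : R) * h))) := by
  have hkmem : k ∈ Finset.range (d + 1) := by
    rw [Finset.mem_range]; omega
  rw [← Finset.mul_prod_erase _ _ hkmem, row_erase c h k d hk]
  simp

/-- Factorization of the product over all interpolation nodes `(α, s) ≠ (i, k)` of the
differences `(λ_i + kħ) − (λ_α + sħ)`, used by Givental to determine the polynomial
coefficients of the correlator from their values. -/
theorem givental_node_product_factorization
    (R : Type*) [CommRing R] (n d : ℕ)
    (lam : Fin (n + 1) → R) (hbar : R) (i : Fin (n + 1))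
    (k : ℕ) (hk : k ≤ d) :
    (∏ p ∈ (Finset.univ ×ˢ Finset.range (d + 1)).erase ((i, k) : Fin (n + 1) × ℕ),
        (lam i - lam p.1 + (((k : ℤ) - (p.2 : ℤ) : ℤ) : R) * hbar)) =
      (∏ α ∈ Finset.univ.erase i, (lam i - lam α)) *
        (k.factorial : R) * hbar ^ k *
        (∏ α ∈ Finset.univ.erase i, ∏ s ∈ Finset.Icc 1 k,
          (lam i - lam α + (s : R) * hbar)) *
        ((d - k).factorial : R) * (-hbar) ^ (d - k) *
        (∏ α ∈ Finset.univ.erase i, ∏ s ∈ Finset.Icc 1 (d - k),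
          (lam i - lam α - (s : R) * hbar)) := by
  have hsplit : (Finset.univ ×ˢ Finset.range (d + 1)).erase ((i, k) : Fin (n + 1) × ℕ)
      = ((Finset.univ.erase i) ×ˢ Finset.range (d + 1))
        ∪ ({i} ×ˢ ((Finset.range (d + 1)).erase k)) := by
    ext ⟨a, s⟩
    simp only [Finset.mem_erase, Finset.mem_product, Finset.mem_union, Finset.mem_univ,
      Finset.mem_singleton, Prod.mk.injEq, Ne, not_and, true_and, and_true]
    by_cases ha : a = i <;> simp [ha]
  have hdisj : Disjoint ((Finset.univ.erase i) ×ˢ Finset.range (d + 1))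
      ({i} ×ˢ ((Finset.range (d + 1)).erase k)) := by
    rw [Finset.disjoint_left]
    rintro ⟨a, s⟩ h1 h2
    simp only [Finset.mem_product, Finset.mem_erase, Finset.mem_singleton] at h1 h2
    exact h1.1.1 h2.1
  have hcast : ∀ p : Fin (n + 1) × ℕ,
      lam i - lam p.1 + (((k : ℤ) - (p.2 : ℤ) : ℤ) : R) * hbar
        = (lam i - lam p.1) + ((k : R) - (p.2 : R)) * hbar := by
    intro p; push_cast; ring
  simp only [hcast]
  rw [hsplit, Finset.prod_union hdisj, Finset.prod_product, Finset.prod_product,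
    Finset.prod_singleton]
  have h1 : ∀ α ∈ Finset.univ.erase i,
      ∏ s ∈ Finset.range (d + 1), ((lam i - lam α) + ((k : R) - (s : R)) * hbar)
        = (lam i - lam α) * ((∏ j ∈ Finset.Icc 1 k, (lam i - lam α + (j : R) * hbar)) *
          (∏ j ∈ Finset.Icc 1 (d - k), (lam i - lam α - (j : R) * hbar))) := by
    intro α _
    exact row_full _ _ _ _ hk
  rw [Finset.prod_congr rfl h1]
  have h2 : ∏ s ∈ (Finset.range (d + 1)).erase k, ((lam i - lam i) + ((k : R) - (s : R)) * hbar)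
      = ((k.factorial : R) * hbar ^ k) * (((d - k).factorial : R) * (-hbar) ^ (d - k)) := by
    rw [row_erase _ _ _ _ hk]
    have e1 : ∏ j ∈ Finset.Icc 1 k, (lam i - lam i + (j : R) * hbar)
        = (k.factorial : R) * hbar ^ k := by
      simp only [sub_self, zero_add]
      rw [Finset.prod_mul_distrib, Finset.prod_const, Nat.card_Icc]
      simp only [Nat.add_sub_cancel]
      congr 1
      rw [← Nat.cast_prod]
      congr 1
      rw [← Finset.Ico_add_one_right_eq_Icc, Finset.prod_Ico_id_eq_factorial]
    have e2 : ∏ j ∈ Finset.Icc 1 (d - k), (lam i - lam i - (j : R) * hbar)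
        = ((d - k).factorial : R) * (-hbar) ^ (d - k) := by
      have : ∀ j : ℕ, lam i - lam i - (j : R) * hbar = (j : R) * (-hbar) := by
        intro j; ring
      simp only [this]
      rw [Finset.prod_mul_distrib, Finset.prod_const, Nat.card_Icc]
      simp only [Nat.add_sub_cancel]
      congr 1
      rw [← Nat.cast_prod]
      congr 1
      rw [← Finset.Ico_add_one_right_eq_Icc, Finset.prod_Ico_id_eq_factorial]
    rw [e1, e2]
  rw [h2]
  simp only [Finset.prod_mul_distrib]
  ring
end
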